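/- arXiv:1904.10789 — 7 statements merged into one kernel-verified Lean document; each statement's English description precedes it below -/
import Mathlib

section
/- Let $B\subseteq\mathbb{F}_2^n$ be a set with $|B|=2$ or $|B|=4$. Then $B=B_d(0,r)$ for some TS-metric $d$ on $\mathbb{F}_2^n$ and some $r>0$ if and only if $B$ has one of the following forms: $B=\{0,e_i\}$ for some $i$; $B=\{0,e_i,e_j,e_k\}$ for pairwise distinct $i,j,k$; or $B=\{0,e_i,e_j,e_i+e_j\}$ for $i\neq j$. -/
abbrev V (n : ℕ) := Fin n → ZMod 2

/-- The support of a vector. -/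
def supp {n : ℕ} (x : V n) : Set (Fin n) := {i | x i ≠ 0}

/-- The standard basis vector `e i`. -/
def e {n : ℕ} (i : Fin n) : V n := Pi.single i 1

/-- `d` is a metric on `𝔽₂ⁿ`. -/
def IsMetric {n : ℕ} (d : V n → V n → ℝ) : Prop :=
  (∀ x y, 0 ≤ d x y) ∧ (∀ x y, d x y = 0 ↔ x = y) ∧
  (∀ x y, d x y = d y x) ∧ (∀ x y z, d x z ≤ d x y + d y z)

/-- `d` is translation-invariant. -/
def TransInv {n : ℕ} (d : V n → V n → ℝ) : Prop :=
  ∀ x y z : V n, d (x + z) (y + z) = d x y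

/-- The weight of `d` respects supports. -/
def RespectsSupport {n : ℕ} (d : V n → V n → ℝ) : Prop :=
  ∀ x y : V n, supp x ⊆ supp y → d x 0 ≤ d y 0

/-- A TS-metric: a translation-invariant metric respecting supports. -/
def IsTSMetric {n : ℕ} (d : V n → V n → ℝ) : Prop :=
  IsMetric d ∧ TransInv d ∧ RespectsSupport d

/-- The ball of center `x` and radius `r`. -/
def ball {n : ℕ} (d : V n → V n → ℝ) (x : V n) (r : ℝ) : Set (V n) :=
  {y | d x y ≤ r}

/-!
A TS-ball of positive radius about `0` is exactly a set containing `0` that is closed under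
passing to vectors of smaller support: any such set `B` is the unit ball of the
translation-invariant metric whose weight is `0` at `0`, `1` on `B \ {0}` and `2` elsewhere (any
two nonzero weights sum to at least `2`, so the triangle inequality is automatic).
If a support-closed set contains a vector with two support points `i ≠ j`, it contains the
four vectors `0, e i, e j, e i + e j`; otherwise it consists of `0` and basis vectors, and
counting gives the three forms.
-/
namespace TSMetric

variable {n : ℕ}

lemma neg_eq_self (v : V n) : -v = v := funext fun i => ZMod.neg_eq_self_mod_two (v i)

lemma supp_injective : Function.Injective (supp : V n → Set (Fin n)) := by
  intro x y h
  funext i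
  have hi : x i ≠ 0 ↔ y i ≠ 0 := Set.ext_iff.mp h i
  revert hi
  generalize x i = a
  generalize y i = b
  revert a b
  decide

@[simp] lemma supp_zero : supp (0 : V n) = ∅ := by
  ext; simp [supp]

@[simp] lemma supp_e (i : Fin n) : supp (e i) = {i} := by
  ext k; by_cases h : k = i <;> simp [supp, e, h]

lemma supp_e_add_e {i j : Fin n} (hij : i ≠ j) : supp (e i + e j) = {i, j} := by
  ext k
  by_cases hi : k = i <;> by_cases hj : k = j <;> simp_all [supp, e, Pi.single_apply]

@[simp] lemma supp_eq_empty_iff {x : V n} : supp x = ∅ ↔ x = 0 := by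
  rw [← supp_zero, supp_injective.eq_iff]

lemma e_injective : Function.Injective (e : Fin n → V n) := fun i j h => by
  simpa using congrArg supp h

lemma e_ne_zero (i : Fin n) : e i ≠ 0 := fun h => by
  simpa using congrArg supp h

lemma supp_subset_singleton_iff {x : V n} {i : Fin n} : supp x ⊆ {i} ↔ x = 0 ∨ x = e i := by
  rw [Set.subset_singleton_iff_eq, ← supp_zero, ← supp_e, supp_injective.eq_iff,
    supp_injective.eq_iff]

lemma supp_subset_pair_iff {x : V n} {i j : Fin n} (hij : i ≠ j) :
    supp x ⊆ {i, j} ↔ x ∈ ({0, e i, e j, e i + e j} : Set (V n)) := by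
  rw [Set.subset_pair_iff_eq, ← supp_e_add_e hij, ← supp_zero, ← supp_e, ← supp_e]
  simp only [supp_injective.eq_iff, Set.mem_insert_iff, Set.mem_singleton_iff]

lemma eq_zero_or_eq_e_of_subsingleton {x : V n} (hx : (supp x).Subsingleton) :
    x = 0 ∨ ∃ i, x = e i := by
  rcases hx.eq_empty_or_singleton with h | ⟨i, h⟩
  · exact Or.inl (supp_injective (h.trans supp_zero.symm))
  · exact Or.inr ⟨i, supp_injective (h.trans (supp_e i).symm)⟩

lemma ncard_basis_square {i j : Fin n} (hij : i ≠ j) :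
    ({0, e i, e j, e i + e j} : Set (V n)).ncard = 4 := by
  have hne : e i ≠ e j := e_injective.ne hij
  have hsum : e i + e j ≠ 0 := fun h => by
    simpa [supp_e_add_e hij] using congrArg (i ∈ supp ·) h
  rw [Set.ncard_insert_of_notMem, Set.ncard_insert_of_notMem, Set.ncard_pair]
  all_goals simp [hne, eq_comm (a := (0 : V n)), e_ne_zero, hsum]

def SuppClosed (B : Set (V n)) : Prop :=
  ∀ ⦃x y : V n⦄, y ∈ B → supp x ⊆ supp y → x ∈ B

lemma zero_mem_ball {d : V n → V n → ℝ} (hzero : ∀ x, d x x = 0) {r : ℝ} (hr : 0 ≤ r) :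
    (0 : V n) ∈ ball d 0 r := by
  simpa [ball, hzero] using hr

lemma suppClosed_ball {d : V n → V n → ℝ} (hsymm : ∀ x y, d x y = d y x)
    (hs : RespectsSupport d) (r : ℝ) : SuppClosed (ball d 0 r) := fun x y hy hxy => by
  change d 0 y ≤ r at hy
  change d 0 x ≤ r
  rw [hsymm 0] at hy ⊢
  exact (hs x y hxy).trans hy

lemma isTSMetric_of_weight {w : V n → ℝ} (hzero : ∀ v, w v = 0 ↔ v = 0)
    (hadd : ∀ a b, w (a + b) ≤ w a + w b) (hmono : ∀ a b, supp a ⊆ supp b → w a ≤ w b) :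
    IsTSMetric fun x y => w (x - y) := by
  have hnonneg (v : V n) : 0 ≤ w v := by
    simpa [(hzero 0).mpr rfl] using hmono 0 v (by simp)
  refine ⟨⟨fun x y => hnonneg _, fun x y => ?_, fun x y => ?_, fun x y z => ?_⟩,
    fun x y z => ?_, fun x y h => ?_⟩
  · simp only [hzero, sub_eq_zero]
  · simp only [← neg_sub y x, neg_eq_self]
  · simpa using hadd (x - y) (y - z)
  · simp only [add_sub_add_right_eq_sub]
  · simpa using hmono x y h

open Classical in
noncomputable def ballWeight (B : Set (V n)) (v : V n) : ℝ :=
  if v = 0 then 0 else if v ∈ B then 1 else 2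

@[simp] lemma ballWeight_zero (B : Set (V n)) : ballWeight B 0 = 0 := if_pos rfl

lemma exists_isTSMetric_ball_eq {B : Set (V n)} (h0 : 0 ∈ B) (hB : SuppClosed B) :
    ∃ (d : V n → V n → ℝ) (r : ℝ), IsTSMetric d ∧ 0 < r ∧ B = ball d 0 r := by
  refine ⟨fun x y => ballWeight B (x - y), 1, isTSMetric_of_weight ?_ ?_ ?_, one_pos, ?_⟩
  · intro v; unfold ballWeight; split_ifs <;> simp_all
  · intro a b
    obtain rfl | ha := eq_or_ne a 0
    · simp
    obtain rfl | hb := eq_or_ne b 0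
    · simp
    calc ballWeight B (a + b) ≤ 2 := by unfold ballWeight; split_ifs <;> norm_num
      _ ≤ ballWeight B a + ballWeight B b := by
        simp only [ballWeight, if_neg ha, if_neg hb]; split_ifs <;> norm_num
  · intro a b hab
    obtain rfl | ha := eq_or_ne a 0
    · simp only [ballWeight]; split_ifs <;> norm_num
    have hb : b ≠ 0 := by rintro rfl; simp_all
    by_cases haB : a ∈ B
    · simp only [ballWeight]; split_ifs <;> norm_num
    · have hbB : b ∉ B := fun hbB => haB (hB hbB hab)
      simp [ballWeight, ha, hb, haB, hbB]
  · ext y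
    change _ ↔ ballWeight B (0 - y) ≤ 1
    rw [zero_sub, neg_eq_self]
    unfold ballWeight
    split_ifs <;> simp_all

lemma exists_isTSMetric_ball_eq_iff {B : Set (V n)} :
    (∃ (d : V n → V n → ℝ) (r : ℝ), IsTSMetric d ∧ 0 < r ∧ B = ball d 0 r) ↔
      0 ∈ B ∧ SuppClosed B := by
  constructor
  · rintro ⟨d, r, ⟨⟨-, hzero, hsymm, -⟩, -, hs⟩, hr, rfl⟩
    exact ⟨zero_mem_ball (fun x => (hzero x x).mpr rfl) hr.le, suppClosed_ball hsymm hs r⟩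
  · rintro ⟨h0, hB⟩
    exact exists_isTSMetric_ball_eq h0 hB

lemma SuppClosed.basis_square_subset {B : Set (V n)} (hB : SuppClosed B) {y : V n} (hy : y ∈ B)
    {i j : Fin n} (hi : i ∈ supp y) (hj : j ∈ supp y) (hij : i ≠ j) :
    ({0, e i, e j, e i + e j} : Set (V n)) ⊆ B := fun _ hx =>
  hB hy (((supp_subset_pair_iff hij).mpr hx).trans (Set.pair_subset hi hj))

lemma eq_insert_zero_image_e {B : Set (V n)} (h0 : 0 ∈ B)
    (hB : ∀ y ∈ B, (supp y).Subsingleton) :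
    B = insert 0 (e '' {i | e i ∈ B}) := by
  ext y
  constructor
  · intro hy
    rcases eq_zero_or_eq_e_of_subsingleton (hB y hy) with rfl | ⟨i, rfl⟩
    · exact Set.mem_insert _ _
    · exact Set.mem_insert_of_mem _ ⟨i, hy, rfl⟩
  · rintro (rfl | ⟨i, hi, rfl⟩)
    exacts [h0, hi]

lemma ncard_insert_zero_image_e (S : Set (Fin n)) :
    (insert 0 (e '' S)).ncard = S.ncard + 1 := by
  rw [Set.ncard_insert_of_notMem, Set.ncard_image_of_injective _ e_injective]
  rintro ⟨i, -, hi⟩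
  exact e_ne_zero i hi

lemma suppClosed_insert_zero_image_e (S : Set (Fin n)) : SuppClosed (insert 0 (e '' S)) := by
  rintro x y (rfl | ⟨i, hi, rfl⟩) hxy
  · simp_all
  · rcases supp_subset_singleton_iff.mp (by simpa using hxy) with rfl | rfl
    exacts [Set.mem_insert _ _, Set.mem_insert_of_mem _ ⟨i, hi, rfl⟩]

lemma suppClosed_basis_square {i j : Fin n} (hij : i ≠ j) :
    SuppClosed ({0, e i, e j, e i + e j} : Set (V n)) := fun _ _ hy hxy =>
  (supp_subset_pair_iff hij).mp (hxy.trans ((supp_subset_pair_iff hij).mpr hy))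

end TSMetric

open TSMetric in
theorem stmt_3 {n : ℕ} (B : Set (V n)) (hcard : B.ncard = 2 ∨ B.ncard = 4) :
    (∃ (d : V n → V n → ℝ) (r : ℝ), IsTSMetric d ∧ 0 < r ∧ B = ball d 0 r) ↔
      ((∃ i : Fin n, B = {0, e i}) ∨
       (∃ i j k : Fin n, i ≠ j ∧ i ≠ k ∧ j ≠ k ∧ B = {0, e i, e j, e k}) ∨
       (∃ i j : Fin n, i ≠ j ∧ B = {0, e i, e j, e i + e j})) := by
  rw [exists_isTSMetric_ball_eq_iff]
  constructor
  · rintro ⟨h0, hB⟩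
    by_cases hsq : ∃ y ∈ B, (supp y).Nontrivial
    · obtain ⟨y, hy, i, hi, j, hj, hij⟩ := hsq
      have hsub := hB.basis_square_subset hy hi hj hij
      have hle := Set.ncard_le_ncard hsub
      rw [ncard_basis_square hij] at hle
      refine Or.inr (Or.inr ⟨i, j, hij, (Set.eq_of_subset_of_ncard_le hsub ?_).symm⟩)
      rw [ncard_basis_square hij]
      omega
    · push Not at hsq
      have hBS := eq_insert_zero_image_e h0 hsq
      have hS := ncard_insert_zero_image_e {i | e i ∈ B}
      rw [← hBS] at hS
      rcases hcard with h | h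
      · obtain ⟨i, hi⟩ := Set.ncard_eq_one.mp (by omega : {i | e i ∈ B}.ncard = 1)
        exact Or.inl ⟨i, by rw [hBS, hi, Set.image_singleton]⟩
      · obtain ⟨i, j, k, hij, hik, hjk, hi⟩ :=
          Set.ncard_eq_three.mp (by omega : {i | e i ∈ B}.ncard = 3)
        exact Or.inr (Or.inl ⟨i, j, k, hij, hik, hjk, by
          rw [hBS, hi, Set.image_insert_eq, Set.image_insert_eq, Set.image_singleton]⟩)
  · rintro (⟨i, rfl⟩ | ⟨i, j, k, -, -, -, rfl⟩ | ⟨i, j, hij, rfl⟩)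
    · refine ⟨Set.mem_insert _ _, ?_⟩
      simpa using suppClosed_insert_zero_image_e {i}
    · refine ⟨Set.mem_insert _ _, ?_⟩
      simpa [Set.image_insert_eq] using suppClosed_insert_zero_image_e {i, j, k}
    · exact ⟨Set.mem_insert _ _, suppClosed_basis_square hij⟩
end

section
/- Let $n\ge 2$ and let $x\in\mathbb{F}_2^n$ with Hamming weight $\omega_H(x)\ge 2$, and set $D_n(x)=\{0,x\}\cup\{e_1,\dots,e_n\}$. Then there exist a TS-metric $d$ on $\mathbb{F}_2^n$ and $r>0$ with $D_n(x)=B_d(0,r)$ if and only if $\omega_H(x)=2$. -/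
/-- The tile `Dₙ(x) = {0, x} ∪ {e₁, …, eₙ}`. -/
def Dtile {n : ℕ} (x : V n) : Set (V n) := {0, x} ∪ Set.range (e (n := n))

variable {n : ℕ}

lemma V.neg_eq (a : V n) : -a = a :=
  funext fun i => CharTwo.neg_eq (a i)

lemma supp_eq_coe_filter (a : V n) : supp a = ↑({i | a i ≠ 0} : Finset (Fin n)) := by
  ext; simp [supp]

lemma hammingNorm_le_of_supp_subset {a b : V n} (h : supp a ⊆ supp b) :
    hammingNorm a ≤ hammingNorm b := by
  rw [supp_eq_coe_filter, supp_eq_coe_filter, Finset.coe_subset] at h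
  exact Finset.card_le_card h

lemma eq_of_supp_subset_of_hammingNorm_le {a b : V n} (h : supp a ⊆ supp b)
    (hle : hammingNorm b ≤ hammingNorm a) : a = b := by
  rw [supp_eq_coe_filter, supp_eq_coe_filter, Finset.coe_subset] at h
  have hsupp := Finset.eq_of_subset_of_card_le h hle
  have hZMod : ∀ c d : ZMod 2, (c ≠ 0 ↔ d ≠ 0) → c = d := by decide
  exact funext fun i => hZMod _ _ (by simpa using congrArg (i ∈ ·) hsupp)

lemma hammingNorm_e (i : Fin n) : hammingNorm (e i) = 1 := by
  simp [hammingNorm, e, Pi.single_apply, Finset.filter_eq']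

lemma exists_supp_subset_hammingNorm_eq {x : V n} {k : ℕ} (hk : k ≤ hammingNorm x) :
    ∃ a : V n, supp a ⊆ supp x ∧ hammingNorm a = k := by
  obtain ⟨t, hts, rfl⟩ := Finset.exists_subset_card_eq hk
  refine ⟨fun j => if j ∈ t then x j else 0, fun j hj => ?_, ?_⟩
  · by_cases hjt : j ∈ t <;> simp_all [supp]
  · unfold hammingNorm
    congr 1
    ext j
    have := @hts j
    by_cases hjt : j ∈ t <;> simp_all

lemma mem_Dtile_iff {x y : V n} : y ∈ Dtile x ↔ hammingNorm y ≤ 1 ∨ y = x := by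
  constructor
  · rintro ((rfl | rfl) | ⟨i, rfl⟩)
    · simp
    · exact .inr rfl
    · exact .inl (hammingNorm_e i).le
  · rintro (hy | rfl)
    · obtain rfl | ⟨i, hi⟩ := eq_or_ne y 0 |>.imp_right Function.ne_iff.mp
      · exact .inl (.inl rfl)
      · have hei : supp (e i) ⊆ supp y := by
          intro j hj
          obtain rfl : j = i := by by_contra hji; simp [supp, e, hji] at hj
          exact hi
        exact .inr ⟨i, eq_of_supp_subset_of_hammingNorm_le hei (hammingNorm_e i ▸ hy)⟩
    · exact .inl (.inr rfl)

def IsDownClosed (S : Set (V n)) : Prop :=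
  ∀ ⦃a b : V n⦄, b ∈ S → supp a ⊆ supp b → a ∈ S

lemma isDownClosed_ball {d : V n → V n → ℝ} (hd : IsTSMetric d) (r : ℝ) :
    IsDownClosed (ball d 0 r) := by
  obtain ⟨⟨-, -, hsymm, -⟩, -, hresp⟩ := hd
  intro a b hb hab
  change d 0 a ≤ r
  change d 0 b ≤ r at hb
  rw [hsymm] at hb ⊢
  exact (hresp a b hab).trans hb

lemma isDownClosed_Dtile {x : V n} (hx : hammingNorm x = 2) : IsDownClosed (Dtile x) := by
  intro a b hb hab
  have hle := hammingNorm_le_of_supp_subset hab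
  rw [mem_Dtile_iff] at hb ⊢
  obtain hb | rfl := hb
  · exact .inl (hle.trans hb)
  · by_cases ha : hammingNorm a ≤ 1
    · exact .inl ha
    · exact .inr (eq_of_supp_subset_of_hammingNorm_le hab (by omega))

lemma hammingNorm_le_two_of_isDownClosed_Dtile {x : V n} (h : IsDownClosed (Dtile x)) :
    hammingNorm x ≤ 2 := by
  by_contra! hx
  obtain ⟨a, hax, ha⟩ := exists_supp_subset_hammingNorm_eq hx.le
  rcases mem_Dtile_iff.mp (h (mem_Dtile_iff.mpr (.inr rfl)) hax) with ha' | rfl <;> omega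

open Classical in
noncomputable def stepWeight (S : Set (V n)) (y : V n) : ℝ :=
  if y = 0 then 0 else if y ∈ S then 1 else 2

section stepWeight

variable (S : Set (V n))

@[simp]
lemma stepWeight_zero : stepWeight S 0 = 0 := by simp [stepWeight]

lemma stepWeight_nonneg (y : V n) : 0 ≤ stepWeight S y := by
  unfold stepWeight; split_ifs <;> norm_num

lemma stepWeight_le_two (y : V n) : stepWeight S y ≤ 2 := by
  unfold stepWeight; split_ifs <;> norm_num

lemma one_le_stepWeight {y : V n} (hy : y ≠ 0) : 1 ≤ stepWeight S y := by
  simp only [stepWeight, hy, if_false]; split_ifs <;> norm_num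

lemma stepWeight_eq_zero_iff {y : V n} : stepWeight S y = 0 ↔ y = 0 := by
  refine ⟨fun h => ?_, fun h => h ▸ stepWeight_zero S⟩
  by_contra hy
  linarith [one_le_stepWeight S hy]

lemma stepWeight_add_le (y z : V n) : stepWeight S (y + z) ≤ stepWeight S y + stepWeight S z := by
  rcases eq_or_ne y 0 with rfl | hy
  · simp
  rcases eq_or_ne z 0 with rfl | hz
  · simp
  linarith [stepWeight_le_two S (y + z), one_le_stepWeight S hy, one_le_stepWeight S hz]

end stepWeight

lemma stepWeight_mono {S : Set (V n)} (hS : IsDownClosed S) {a b : V n} (hab : supp a ⊆ supp b) :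
    stepWeight S a ≤ stepWeight S b := by
  rcases eq_or_ne a 0 with rfl | ha
  · simp [stepWeight_nonneg]
  have hb : b ≠ 0 := by
    rintro rfl
    exact ha (funext fun i => by_contra fun hi => hab hi rfl)
  by_cases hbS : b ∈ S
  · simp [stepWeight, ha, hb, hbS, hS hbS hab]
  · simpa [stepWeight, hb, hbS] using stepWeight_le_two S a

lemma isTSMetric_stepWeight {S : Set (V n)} (hS : IsDownClosed S) :
    IsTSMetric fun u v => stepWeight S (u - v) := by
  refine ⟨⟨fun u v => stepWeight_nonneg S _, fun u v => ?_, fun u v => ?_, fun u v w => ?_⟩,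
    fun u v w => ?_, fun a b hab => ?_⟩
  · rw [stepWeight_eq_zero_iff, sub_eq_zero]
  · change stepWeight S (u - v) = stepWeight S (v - u)
    rw [← neg_sub, V.neg_eq]
  · simpa only [sub_add_sub_cancel] using stepWeight_add_le S (u - v) (v - w)
  · simp only [add_sub_add_right_eq_sub]
  · simpa only [sub_zero] using stepWeight_mono hS hab

lemma ball_stepWeight {S : Set (V n)} (h0 : 0 ∈ S) :
    ball (fun u v => stepWeight S (u - v)) 0 1 = S := by
  ext y
  simp only [ball, Set.mem_ofPred_eq, zero_sub, V.neg_eq]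
  unfold stepWeight
  split_ifs with hy hyS <;> simp_all

theorem stmt_5_general {n : ℕ} (x : V n) (hx : 2 ≤ hammingNorm x) :
    (∃ (d : V n → V n → ℝ) (r : ℝ), IsTSMetric d ∧ 0 < r ∧
        Dtile x = ball d 0 r) ↔ hammingNorm x = 2 := by
  constructor
  · rintro ⟨d, r, hd, -, hball⟩
    have := hammingNorm_le_two_of_isDownClosed_Dtile (hball ▸ isDownClosed_ball hd r)
    omega
  · intro hx2
    have h0 : (0 : V n) ∈ Dtile x := .inl (.inl rfl)
    exact ⟨_, 1, isTSMetric_stepWeight (isDownClosed_Dtile hx2), one_pos,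
      (ball_stepWeight h0).symm⟩

theorem stmt_5 {n : ℕ} (hn : 2 ≤ n) (x : V n) (hx : 2 ≤ hammingNorm x) :
    (∃ (d : V n → V n → ℝ) (r : ℝ), IsTSMetric d ∧ 0 < r ∧
        Dtile x = ball d 0 r) ↔ hammingNorm x = 2 :=
  stmt_5_general x hx
end

section
/- Let $s\le n$, let $d$ be a TS-metric on $\mathbb{F}_2^s$, $r>0$, and $D=B_d(0,r)\subseteq\mathbb{F}_2^s$. Then there exists a TS-metric $d^*$ on $\mathbb{F}_2^n$ such that $D^*=B_{d^*}(0,r)$, where $D^*=D\mid\{0_{n-s}\}=\{(x_1,\dots,x_s,0,\dots,0) : x\in D\}\subseteq\mathbb{F}_2^n$. -/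
/-- Extension of a vector of `𝔽₂ˢ` to a vector of `𝔽₂ⁿ` (for `s ≤ n`) by
padding with zeros. -/
def extendV (s n : ℕ) (x : V s) : V n :=
  fun i => if hi : (i : ℕ) < s then x ⟨(i : ℕ), hi⟩ else 0

theorem V.add_eq_zero_iff {n : ℕ} {x y : V n} : x + y = 0 ↔ x = y := by
  simp only [funext_iff, Pi.add_apply, Pi.zero_apply, CharTwo.add_eq_zero]

theorem V.add_self {n : ℕ} (x : V n) : x + x = 0 :=
  V.add_eq_zero_iff.2 rfl

structure IsTSWeight {n : ℕ} (w : V n → ℝ) : Prop where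
  nonneg : ∀ x, 0 ≤ w x
  eq_zero_iff : ∀ x, w x = 0 ↔ x = 0
  add_le : ∀ x y, w (x + y) ≤ w x + w y
  mono : ∀ x y, supp x ⊆ supp y → w x ≤ w y

theorem IsTSWeight.isTSMetric {n : ℕ} {w : V n → ℝ} (hw : IsTSWeight w) :
    IsTSMetric fun x y => w (x + y) := by
  refine ⟨⟨fun x y => hw.nonneg _, fun x y => (hw.eq_zero_iff _).trans V.add_eq_zero_iff,
    fun x y => by simp only [add_comm], fun x y z => ?_⟩, fun x y z => ?_, fun x y h => ?_⟩
  · calc w (x + z) = w ((x + y) + (y + z)) := by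
          rw [add_assoc, ← add_assoc y, V.add_self, zero_add]
      _ ≤ w (x + y) + w (y + z) := hw.add_le _ _
  · simp only [add_add_add_comm, V.add_self, add_zero]
  · simpa only [add_zero] using hw.mono x y h

theorem IsTSMetric.isTSWeight {n : ℕ} {d : V n → V n → ℝ} (hd : IsTSMetric d) :
    IsTSWeight fun x => d x 0 := by
  obtain ⟨⟨hnonneg, hzero, -, htri⟩, htrans, hmono⟩ := hd
  refine ⟨fun x => hnonneg x 0, fun x => hzero x 0, fun x y => ?_, hmono⟩
  calc d (x + y) 0 ≤ d (x + y) y + d y 0 := htri _ _ _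
    _ = d x 0 + d y 0 := by rw [← htrans x 0 y, zero_add]

section Restriction

variable {s n : ℕ} (h : s ≤ n)

def restrictV (x : V n) : V s := fun j => x (Fin.castLE h j)

def TailZero (s : ℕ) (x : V n) : Prop := ∀ i : Fin n, s ≤ (i : ℕ) → x i = 0

theorem restrictV_add (x y : V n) : restrictV h (x + y) = restrictV h x + restrictV h y := rfl

theorem restrictV_zero : restrictV h (0 : V n) = 0 := rfl

theorem supp_restrictV_subset {x y : V n} (hxy : supp x ⊆ supp y) :
    supp (restrictV h x) ⊆ supp (restrictV h y) :=
  fun _ hj => hxy hj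

theorem restrictV_extendV (x : V s) : restrictV h (extendV s n x) = x := by
  funext j
  simp [restrictV, extendV, j.isLt]

theorem tailZero_zero : TailZero s (0 : V n) := fun _ _ => rfl

theorem tailZero_extendV (x : V s) : TailZero s (extendV s n x) := by
  intro i hi
  simp [extendV, not_lt.2 hi]

theorem extendV_restrictV {x : V n} (hx : TailZero s x) : extendV s n (restrictV h x) = x := by
  funext i
  by_cases hi : (i : ℕ) < s
  · simp [extendV, restrictV, hi]
  · simp [extendV, hi, hx i (not_lt.1 hi)]

theorem image_extendV (S : Set (V s)) :
    extendV s n '' S = {y | TailZero s y ∧ restrictV h y ∈ S} := by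
  ext y
  constructor
  · rintro ⟨x, hx, rfl⟩
    exact ⟨tailZero_extendV x, by rwa [restrictV_extendV]⟩
  · rintro ⟨hy, hyS⟩
    exact ⟨_, hyS, extendV_restrictV h hy⟩

end Restriction

section TailPenalty

variable {s n : ℕ} {c : ℝ}

open Classical in
noncomputable def tailPenalty (s : ℕ) (c : ℝ) (x : V n) : ℝ := if TailZero s x then 0 else c

theorem tailPenalty_nonneg (hc : 0 ≤ c) (x : V n) : 0 ≤ tailPenalty s c x := by
  unfold tailPenalty
  split_ifs
  exacts [le_rfl, hc]

theorem tailPenalty_eq_zero_iff (hc : 0 < c) (x : V n) :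
    tailPenalty s c x = 0 ↔ TailZero s x := by
  unfold tailPenalty
  split_ifs with hx <;> simp [hx, hc.ne']

theorem tailPenalty_add_le (hc : 0 ≤ c) (x y : V n) :
    tailPenalty s c (x + y) ≤ tailPenalty s c x + tailPenalty s c y := by
  by_cases hxy : TailZero s (x + y)
  · simp only [tailPenalty, if_pos hxy]
    exact add_nonneg (tailPenalty_nonneg hc x) (tailPenalty_nonneg hc y)
  have : ¬ TailZero s x ∨ ¬ TailZero s y := by
    contrapose! hxy
    intro i hi
    simp [hxy.1 i hi, hxy.2 i hi]
  rcases this with hx | hy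
  · simp only [tailPenalty, if_neg hxy, if_neg hx, le_add_iff_nonneg_right]
    exact tailPenalty_nonneg hc y
  · simp only [tailPenalty, if_neg hxy, if_neg hy, le_add_iff_nonneg_left]
    exact tailPenalty_nonneg hc x

theorem tailPenalty_mono (hc : 0 ≤ c) {x y : V n} (hxy : supp x ⊆ supp y) :
    tailPenalty s c x ≤ tailPenalty s c y := by
  by_cases hy : TailZero s y
  · have hx : TailZero s x := fun i hi => not_not.1 fun hxi => hxy hxi (hy i hi)
    simp [tailPenalty, hx, hy]
  · simp only [tailPenalty, if_neg hy]
    split_ifs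
    exacts [hc, le_rfl]

end TailPenalty

theorem IsTSWeight.restrictV_add_tailPenalty {s n : ℕ} (h : s ≤ n) {w : V s → ℝ}
    (hw : IsTSWeight w) {c : ℝ} (hc : 0 < c) :
    IsTSWeight fun x : V n => w (restrictV h x) + tailPenalty s c x where
  nonneg x := add_nonneg (hw.nonneg _) (tailPenalty_nonneg hc.le x)
  eq_zero_iff x := by
    rw [add_eq_zero_iff_of_nonneg (hw.nonneg _) (tailPenalty_nonneg hc.le x), hw.eq_zero_iff,
      tailPenalty_eq_zero_iff hc]
    constructor
    · rintro ⟨hres, htail⟩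
      rw [← extendV_restrictV h htail, hres, ← restrictV_zero h,
        extendV_restrictV h tailZero_zero]
    · rintro rfl
      exact ⟨restrictV_zero h, tailZero_zero⟩
  add_le x y := by
    have := hw.add_le (restrictV h x) (restrictV h y)
    have := tailPenalty_add_le (s := s) hc.le x y
    rw [restrictV_add]
    linarith
  mono x y hxy :=
    add_le_add (hw.mono _ _ (supp_restrictV_subset h hxy)) (tailPenalty_mono hc.le hxy)

theorem add_tailPenalty_le_iff {s n : ℕ} {a c r : ℝ} (ha : 0 ≤ a) (hrc : r < c) (x : V n) :
    a + tailPenalty s c x ≤ r ↔ TailZero s x ∧ a ≤ r := by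
  by_cases hx : TailZero s x
  · simp [tailPenalty, hx]
  · simp only [tailPenalty, hx, if_false, false_and, iff_false, not_le]
    linarith

theorem stmt_6 {s n : ℕ} (hsn : s ≤ n) (d : V s → V s → ℝ)
    (hd : IsTSMetric d) (r : ℝ) (hr : 0 < r) :
    ∃ d' : V n → V n → ℝ, IsTSMetric d' ∧
      (extendV s n) '' (ball d 0 r) = ball d' 0 r := by
  have hw := hd.isTSWeight.restrictV_add_tailPenalty hsn (c := r + 1) (by linarith)
  refine ⟨_, hw.isTSMetric, ?_⟩
  obtain ⟨⟨hnonneg, -, hsymm, -⟩, -⟩ := hd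
  ext y
  simp only [image_extendV hsn, ball, Set.mem_ofPred_eq, zero_add, hsymm 0,
    add_tailPenalty_le_iff (hnonneg _ 0) (lt_add_one r)]
end

section
/- Let $D_1\subseteq\mathbb{F}_2^n$ and $D_2\subseteq\mathbb{F}_2^m$ be nonempty sets and let $D=D_1\mid D_2\subseteq\mathbb{F}_2^{n+m}$ be their concatenation. Then $D$ is a polyhedromino if and only if both $D_1$ and $D_2$ are polyhedrominoes. -/
/-- Concatenation of a set of vectors of `𝔽₂ⁿ` with a set of vectors of `𝔽₂ᵐ`. -/
def concatSet {n m : ℕ} (A : Set (V n)) (B : Set (V m)) : Set (V (n + m)) :=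
  {z | ∃ a ∈ A, ∃ b ∈ B, z = Fin.append a b}

/-- `γ` is a geodesic path of length `t` (for the Hamming distance). -/
def IsGeodesic {n : ℕ} (γ : ℕ → V n) (t : ℕ) : Prop :=
  (∀ i < t, hammingDist (γ i) (γ (i + 1)) = 1) ∧ hammingDist (γ 0) (γ t) = t

/-- A polyhedromino: a nonempty set any two points of which are connected by a
geodesic path contained in the set. -/
def IsPolyhedromino {n : ℕ} (D : Set (V n)) : Prop :=
  D.Nonempty ∧ ∀ x ∈ D, ∀ y ∈ D, ∃ (t : ℕ) (γ : ℕ → V n),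
    IsGeodesic γ t ∧ γ 0 = x ∧ γ t = y ∧ ∀ i ≤ t, γ i ∈ D

/-!
A subset of the Hamming cube is a polyhedromino exactly when it is nonempty and from any point
`x` one can take a unit step inside the set towards any other point `y`, i.e. to a neighbour `z`
with `d(z, y) = d(x, y) - 1`; geodesics are then built one step at a time. Since the Hamming
distance on `D₁ | D₂` is the sum of the distances on the two blocks, a step of `D₁ | D₂` towards a
point changes exactly one block by a step towards the corresponding block of that point, and this
local condition passes between `D₁ | D₂` and its factors.
-/

theorem hammingDist_append {β : Type*} [DecidableEq β] {n m : ℕ} (a a' : Fin n → β)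
    (b b' : Fin m → β) :
    hammingDist (Fin.append a b) (Fin.append a' b') = hammingDist a a' + hammingDist b b' := by
  simp only [hammingDist, Finset.card_filter, Fin.sum_univ_add, Fin.append_left, Fin.append_right]

section Steps

variable {n : ℕ}

def HasGeodesicSteps (D : Set (V n)) : Prop :=
  ∀ x ∈ D, ∀ y ∈ D, x ≠ y → ∃ z ∈ D,
    hammingDist x z = 1 ∧ hammingDist z y + 1 = hammingDist x y

theorem hammingDist_le_of_unit_steps {γ : ℕ → V n} {t : ℕ}
    (hγ : ∀ i < t, hammingDist (γ i) (γ (i + 1)) = 1) (i : ℕ) :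
    ∀ k, i + k ≤ t → hammingDist (γ i) (γ (i + k)) ≤ k
  | 0, _ => by simp
  | k + 1, hk => calc
      hammingDist (γ i) (γ (i + k + 1))
        ≤ hammingDist (γ i) (γ (i + k)) + hammingDist (γ (i + k)) (γ (i + k + 1)) :=
          hammingDist_triangle _ _ _
      _ ≤ k + 1 := by
          rw [hγ (i + k) (by omega)]
          exact Nat.add_le_add_right (hammingDist_le_of_unit_steps hγ i k (by omega)) 1

theorem IsGeodesic.cons {γ : ℕ → V n} {t : ℕ} (hγ : IsGeodesic γ t) {x : V n}
    (hx : hammingDist x (γ 0) = 1) (hxt : hammingDist x (γ t) = t + 1) :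
    IsGeodesic (fun | 0 => x | i + 1 => γ i) (t + 1) := by
  refine ⟨fun i hi => ?_, hxt⟩
  cases i with
  | zero => exact hx
  | succ i => exact hγ.1 i (by omega)

theorem IsPolyhedromino.hasGeodesicSteps {D : Set (V n)} (hD : IsPolyhedromino D) :
    HasGeodesicSteps D := by
  intro x hx y hy hxy
  obtain ⟨t, γ, ⟨hstep, hdist⟩, rfl, rfl, hmem⟩ := hD.2 x hx y hy
  have ht : 0 < t := Nat.pos_of_ne_zero fun h => hxy (by rw [h])
  have hfirst : hammingDist (γ 0) (γ 1) = 1 := hstep 0 ht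
  have hrest : hammingDist (γ 1) (γ t) ≤ t - 1 := by
    simpa [Nat.add_sub_cancel' ht] using hammingDist_le_of_unit_steps hstep 1 (t - 1) (by omega)
  have htri := hammingDist_triangle (γ 0) (γ 1) (γ t)
  exact ⟨γ 1, hmem 1 ht, hfirst, by omega⟩

theorem isPolyhedromino_of_hasGeodesicSteps {D : Set (V n)} (hne : D.Nonempty)
    (hD : HasGeodesicSteps D) : IsPolyhedromino D := by
  refine ⟨hne, fun x hx y hy => ?_⟩
  induction hxy : hammingDist x y generalizing x with
  | zero =>
    refine ⟨0, fun _ => x, ⟨nofun, by simp⟩, rfl, hammingDist_eq_zero.mp hxy, fun _ _ => hx⟩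
  | succ d ih =>
    obtain ⟨z, hz, hxz, hzy⟩ := hD x hx y hy (hammingDist_ne_zero.mp (by omega))
    obtain ⟨t, γ, hγ, rfl, rfl, hmem⟩ := ih z hz (by omega)
    have ht : t = d := by have := hγ.2; omega
    subst ht
    refine ⟨t + 1, _, hγ.cons hxz (by omega), rfl, rfl, fun i hi => ?_⟩
    cases i with
    | zero => exact hx
    | succ i => exact hmem i (by omega)

theorem isPolyhedromino_iff_hasGeodesicSteps {D : Set (V n)} :
    IsPolyhedromino D ↔ D.Nonempty ∧ HasGeodesicSteps D :=
  ⟨fun hD => ⟨hD.1, hD.hasGeodesicSteps⟩, fun hD => isPolyhedromino_of_hasGeodesicSteps hD.1 hD.2⟩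

end Steps

section Concat

variable {n m : ℕ} {A : Set (V n)} {B : Set (V m)}

theorem concatSet_nonempty_iff : (concatSet A B).Nonempty ↔ A.Nonempty ∧ B.Nonempty := by
  constructor
  · rintro ⟨_, a, ha, b, hb, rfl⟩
    exact ⟨⟨a, ha⟩, ⟨b, hb⟩⟩
  · rintro ⟨⟨a, ha⟩, ⟨b, hb⟩⟩
    exact ⟨_, a, ha, b, hb, rfl⟩

theorem HasGeodesicSteps.of_concatSet_left (hD : HasGeodesicSteps (concatSet A B)) {b : V m}
    (hb : b ∈ B) : HasGeodesicSteps A := by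
  intro x hx y hy hxy
  have hne : Fin.append x b ≠ Fin.append y b := by
    rw [← hammingDist_ne_zero, hammingDist_append, hammingDist_self, add_zero]
    exact hammingDist_ne_zero.mpr hxy
  obtain ⟨_, ⟨a, ha, b', -, rfl⟩, hstep, hcloser⟩ :=
    hD _ ⟨x, hx, b, hb, rfl⟩ _ ⟨y, hy, b, hb, rfl⟩ hne
  simp only [hammingDist_append, hammingDist_self, add_zero] at hstep hcloser
  -- a step that moved `b` would bring `x` no closer to `y`
  have htri := hammingDist_triangle x a y
  have hcomm := hammingDist_comm b' b
  exact ⟨a, ha, by omega, by omega⟩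

theorem HasGeodesicSteps.of_concatSet_right (hD : HasGeodesicSteps (concatSet A B)) {a : V n}
    (ha : a ∈ A) : HasGeodesicSteps B := by
  intro x hx y hy hxy
  have hne : Fin.append a x ≠ Fin.append a y := by
    rw [← hammingDist_ne_zero, hammingDist_append, hammingDist_self, zero_add]
    exact hammingDist_ne_zero.mpr hxy
  obtain ⟨_, ⟨a', -, b, hb, rfl⟩, hstep, hcloser⟩ :=
    hD _ ⟨a, ha, x, hx, rfl⟩ _ ⟨a, ha, y, hy, rfl⟩ hne
  simp only [hammingDist_append, hammingDist_self, zero_add] at hstep hcloser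
  have htri := hammingDist_triangle x b y
  have hcomm := hammingDist_comm a' a
  exact ⟨b, hb, by omega, by omega⟩

theorem HasGeodesicSteps.concatSet (hA : HasGeodesicSteps A) (hB : HasGeodesicSteps B) :
    HasGeodesicSteps (concatSet A B) := by
  rintro _ ⟨a, ha, b, hb, rfl⟩ _ ⟨a', ha', b', hb', rfl⟩ hne
  by_cases haa : a = a'
  · subst haa
    obtain ⟨z, hz, hstep, hcloser⟩ := hB b hb b' hb' fun h => hne (h ▸ rfl)
    refine ⟨Fin.append a z, ⟨a, ha, z, hz, rfl⟩, ?_⟩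
    simp only [hammingDist_append, hammingDist_self]
    omega
  · obtain ⟨z, hz, hstep, hcloser⟩ := hA a ha a' ha' haa
    refine ⟨Fin.append z b, ⟨z, hz, b, hb, rfl⟩, ?_⟩
    simp only [hammingDist_append, hammingDist_self]
    omega

end Concat

theorem stmt_7_general {n m : ℕ} (D₁ : Set (V n)) (D₂ : Set (V m)) :
    IsPolyhedromino (concatSet D₁ D₂) ↔
      IsPolyhedromino D₁ ∧ IsPolyhedromino D₂ := by
  simp only [isPolyhedromino_iff_hasGeodesicSteps, concatSet_nonempty_iff]
  constructor
  · rintro ⟨⟨hne₁, hne₂⟩, hD⟩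
    exact ⟨⟨hne₁, hD.of_concatSet_left hne₂.some_mem⟩,
      ⟨hne₂, hD.of_concatSet_right hne₁.some_mem⟩⟩
  · rintro ⟨⟨hne₁, hA⟩, ⟨hne₂, hB⟩⟩
    exact ⟨⟨hne₁, hne₂⟩, hA.concatSet hB⟩

theorem stmt_7 {n m : ℕ} (D₁ : Set (V n)) (D₂ : Set (V m))
    (h₁ : D₁.Nonempty) (h₂ : D₂.Nonempty) :
    IsPolyhedromino (concatSet D₁ D₂) ↔
      IsPolyhedromino D₁ ∧ IsPolyhedromino D₂ :=
  stmt_7_general D₁ D₂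
end

section
/- If $C_1\subseteq\mathbb{F}_2^n$ and $C_2\subseteq\mathbb{F}_2^m$ are TS-perfect codes, then the concatenation $C_1\mid C_2\subseteq\mathbb{F}_2^{n+m}$ is a TS-perfect code; that is, there exist a TS-metric $d$ on $\mathbb{F}_2^{n+m}$ and a radius $\rho>0$ such that the balls $B_d(c,\rho)$, $c\in C_1\mid C_2$, are pairwise disjoint and cover $\mathbb{F}_2^{n+m}$. -/
/-- `C` is a `(d, r)`-perfect code. -/
def IsPerfect {n : ℕ} (d : V n → V n → ℝ) (C : Set (V n)) (r : ℝ) : Prop :=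
  (⋃ c ∈ C, ball d c r) = Set.univ ∧ C.PairwiseDisjoint (fun c => ball d c r)

/-- `C` is a TS-perfect code: a `(d, r)`-perfect code for some TS-metric `d`
and some radius `r > 0`. -/
def IsTSPerfect {n : ℕ} (C : Set (V n)) : Prop :=
  ∃ (d : V n → V n → ℝ) (r : ℝ), IsTSMetric d ∧ 0 < r ∧ IsPerfect d C r

/-!
Rescale the two metrics so that both codes become perfect with radius `1`, and give `𝔽₂ⁿ⁺ᵐ` the
maximum of the two rescaled metrics on the two blocks of coordinates. Its unit ball about
`a ∣ b` is the product of the unit balls about `a` and `b`, so the balls about the codewords of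
`C₁ ∣ C₂` are pairwise disjoint and cover the space exactly when those of `C₁` and `C₂` do.
-/

section Rescale

variable {n : ℕ} {d : V n → V n → ℝ} {r : ℝ}

theorem IsTSMetric.div_const (hd : IsTSMetric d) (hr : 0 < r) :
    IsTSMetric (fun x y => d x y / r) := by
  obtain ⟨⟨nonneg, eq_zero, symm, triangle⟩, trans, supp_le⟩ := hd
  refine ⟨⟨fun x y => div_nonneg (nonneg x y) hr.le, fun x y => ?_, fun x y => by simp only [symm],
    fun x y z => ?_⟩, fun x y z => by simp only [trans x y z], fun x y h => ?_⟩
  · rw [div_eq_zero_iff, eq_zero, or_iff_left hr.ne']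
  · rw [← add_div]
    exact div_le_div_of_nonneg_right (triangle x y z) hr.le
  · exact div_le_div_of_nonneg_right (supp_le x y h) hr.le

theorem ball_div_const (hr : 0 < r) (c : V n) :
    ball (fun x y => d x y / r) c 1 = ball d c r := by
  ext y
  simp only [ball, Set.mem_ofPred_eq, div_le_one hr]

theorem IsPerfect.div_const {C : Set (V n)} (h : IsPerfect d C r) (hr : 0 < r) :
    IsPerfect (fun x y => d x y / r) C 1 := by
  simpa only [IsPerfect, ball_div_const hr] using h

end Rescale

section Concat

variable {n m : ℕ}

def leftPart (x : V (n + m)) : V n := fun i => x (Fin.castAdd m i)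

def rightPart (x : V (n + m)) : V m := fun j => x (Fin.natAdd n j)

@[simp]
theorem leftPart_append (a : V n) (b : V m) : leftPart (Fin.append a b) = a := by
  funext i
  simp [leftPart]

@[simp]
theorem rightPart_append (a : V n) (b : V m) : rightPart (Fin.append a b) = b := by
  funext j
  simp [rightPart]

theorem append_leftPart_rightPart (x : V (n + m)) : Fin.append (leftPart x) (rightPart x) = x :=
  Fin.append_castAdd_natAdd

theorem eq_of_leftPart_eq_of_rightPart_eq {x y : V (n + m)} (hl : leftPart x = leftPart y)
    (hr : rightPart x = rightPart y) : x = y := by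
  rw [← append_leftPart_rightPart x, ← append_leftPart_rightPart y, hl, hr]

theorem supp_leftPart_subset {x y : V (n + m)} (h : supp x ⊆ supp y) :
    supp (leftPart x) ⊆ supp (leftPart y) :=
  fun _ hi => h hi

theorem supp_rightPart_subset {x y : V (n + m)} (h : supp x ⊆ supp y) :
    supp (rightPart x) ⊆ supp (rightPart y) :=
  fun _ hi => h hi

def concatMetric (d₁ : V n → V n → ℝ) (d₂ : V m → V m → ℝ) (x y : V (n + m)) : ℝ :=
  max (d₁ (leftPart x) (leftPart y)) (d₂ (rightPart x) (rightPart y))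

variable {d₁ : V n → V n → ℝ} {d₂ : V m → V m → ℝ}

theorem IsMetric.concat (h₁ : IsMetric d₁) (h₂ : IsMetric d₂) :
    IsMetric (concatMetric d₁ d₂) := by
  obtain ⟨nonneg₁, eq_zero₁, symm₁, triangle₁⟩ := h₁
  obtain ⟨nonneg₂, eq_zero₂, symm₂, triangle₂⟩ := h₂
  refine ⟨fun x y => le_max_of_le_left (nonneg₁ _ _), fun x y => ⟨fun h => ?_, ?_⟩,
    fun x y => by rw [concatMetric, symm₁, symm₂, concatMetric], fun x y z => ?_⟩
  · have hle := h.le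
    rw [concatMetric, max_le_iff] at hle
    exact eq_of_leftPart_eq_of_rightPart_eq
      ((eq_zero₁ _ _).mp (hle.1.antisymm (nonneg₁ _ _)))
      ((eq_zero₂ _ _).mp (hle.2.antisymm (nonneg₂ _ _)))
  · rintro rfl
    rw [concatMetric, (eq_zero₁ _ _).mpr rfl, (eq_zero₂ _ _).mpr rfl, max_self]
  · exact max_le
      ((triangle₁ _ _ _).trans (add_le_add (le_max_left _ _) (le_max_left _ _)))
      ((triangle₂ _ _ _).trans (add_le_add (le_max_right _ _) (le_max_right _ _)))

theorem TransInv.concat (h₁ : TransInv d₁) (h₂ : TransInv d₂) :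
    TransInv (concatMetric d₁ d₂) :=
  fun x y z => congrArg₂ max (h₁ (leftPart x) (leftPart y) (leftPart z))
    (h₂ (rightPart x) (rightPart y) (rightPart z))

theorem RespectsSupport.concat (h₁ : RespectsSupport d₁) (h₂ : RespectsSupport d₂) :
    RespectsSupport (concatMetric d₁ d₂) :=
  fun _ _ h => max_le_max (h₁ _ _ (supp_leftPart_subset h)) (h₂ _ _ (supp_rightPart_subset h))

theorem IsTSMetric.concat (h₁ : IsTSMetric d₁) (h₂ : IsTSMetric d₂) :
    IsTSMetric (concatMetric d₁ d₂) :=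
  ⟨h₁.1.concat h₂.1, h₁.2.1.concat h₂.2.1, h₁.2.2.concat h₂.2.2⟩

theorem mem_ball_concatMetric {r : ℝ} {a : V n} {b : V m} {z : V (n + m)} :
    z ∈ ball (concatMetric d₁ d₂) (Fin.append a b) r ↔
      leftPart z ∈ ball d₁ a r ∧ rightPart z ∈ ball d₂ b r := by
  simp only [ball, Set.mem_ofPred_eq, concatMetric, leftPart_append, rightPart_append, max_le_iff]

theorem IsPerfect.concat {C₁ : Set (V n)} {C₂ : Set (V m)} {r : ℝ} (h₁ : IsPerfect d₁ C₁ r)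
    (h₂ : IsPerfect d₂ C₂ r) : IsPerfect (concatMetric d₁ d₂) (concatSet C₁ C₂) r := by
  obtain ⟨cover₁, disj₁⟩ := h₁
  obtain ⟨cover₂, disj₂⟩ := h₂
  refine ⟨Set.eq_univ_of_forall fun z => ?_, ?_⟩
  · obtain ⟨a, ha, hza⟩ := Set.mem_iUnion₂.mp (cover₁ ▸ Set.mem_univ (leftPart z))
    obtain ⟨b, hb, hzb⟩ := Set.mem_iUnion₂.mp (cover₂ ▸ Set.mem_univ (rightPart z))
    exact Set.mem_iUnion₂.mpr ⟨_, ⟨a, ha, b, hb, rfl⟩, mem_ball_concatMetric.mpr ⟨hza, hzb⟩⟩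
  · rintro _ ⟨a, ha, b, hb, rfl⟩ _ ⟨a', ha', b', hb', rfl⟩ hne
    refine Set.disjoint_left.mpr fun z hz hz' => hne ?_
    rw [mem_ball_concatMetric] at hz hz'
    have hA : a = a' := disj₁.elim ha ha' (Set.not_disjoint_iff.mpr ⟨_, hz.1, hz'.1⟩)
    have hB : b = b' := disj₂.elim hb hb' (Set.not_disjoint_iff.mpr ⟨_, hz.2, hz'.2⟩)
    rw [hA, hB]

end Concat

theorem stmt_12 {n m : ℕ} (C₁ : Set (V n)) (C₂ : Set (V m))
    (h₁ : IsTSPerfect C₁) (h₂ : IsTSPerfect C₂) :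
    IsTSPerfect (concatSet C₁ C₂) := by
  obtain ⟨d₁, r₁, hd₁, hr₁, hC₁⟩ := h₁
  obtain ⟨d₂, r₂, hd₂, hr₂, hC₂⟩ := h₂
  exact ⟨concatMetric (fun x y => d₁ x y / r₁) (fun x y => d₂ x y / r₂), 1,
    (hd₁.div_const hr₁).concat (hd₂.div_const hr₂), one_pos,
    (hC₁.div_const hr₁).concat (hC₂.div_const hr₂)⟩
end

section
/- Let $\mathcal{F}$ be a covering of $[n]$, let $r\ge 1$ be an integer, and let $D=B_{d_{\mathcal{F}}}(0,r)\subseteq\mathbb{F}_2^n$. Define the covering $\mathcal{F}(D)=\mathcal{F}\cup\{\mathrm{supp}(x) : x\in D,\ x\neq 0\}$ of $[n]$. Then $D=B_{d_{\mathcal{F}(D)}}(0,1)$. -/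
/-- `F` is a covering of the coordinate set. -/
def IsCovering {n : ℕ} (F : Set (Set (Fin n))) : Prop := ⋃₀ F = Set.univ

/-- The combinatorial weight associated with a family `F`. -/
noncomputable def combWeight {n : ℕ} (F : Set (Set (Fin n))) (x : V n) : ℕ :=
  sInf {k | ∃ A : Finset (Set (Fin n)), ↑A ⊆ F ∧
    supp x ⊆ ⋃₀ (↑A : Set (Set (Fin n))) ∧ A.card = k}

/-- The combinatorial metric associated with `F`. -/
noncomputable def combDist {n : ℕ} (F : Set (Set (Fin n))) (x y : V n) : ℕ :=
  combWeight F (x - y)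

/-- The ball of the combinatorial metric. -/
def combBall {n : ℕ} (F : Set (Set (Fin n))) (x : V n) (r : ℕ) : Set (V n) :=
  {y | combDist F x y ≤ r}

/-- The `(D, F)`-covering: `F` together with the supports of the nonzero
elements of `D`. -/
def coveringOf {n : ℕ} (F : Set (Set (Fin n))) (D : Set (V n)) :
    Set (Set (Fin n)) :=
  F ∪ {S | ∃ x ∈ D, x ≠ 0 ∧ S = supp x}

lemma supp_eq_empty_iff {n : ℕ} {x : V n} : supp x = ∅ ↔ x = 0 := by
  simp [supp, Set.eq_empty_iff_forall_notMem, funext_iff]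

lemma supp_neg {n : ℕ} (x : V n) : supp (-x) = supp x := by
  ext i
  simp [supp]

lemma IsCovering.mono {n : ℕ} {F G : Set (Set (Fin n))} (hF : IsCovering F) (hFG : F ⊆ G) :
    IsCovering G :=
  Set.eq_univ_of_univ_subset (hF ▸ Set.sUnion_mono hFG)

section combWeight

variable {n : ℕ} {F : Set (Set (Fin n))}

lemma combWeight_le {x : V n} {A : Finset (Set (Fin n))} (hAF : ↑A ⊆ F)
    (hx : supp x ⊆ ⋃₀ (↑A : Set (Set (Fin n)))) : combWeight F x ≤ A.card :=
  Nat.sInf_le ⟨A, hAF, hx, rfl⟩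

-- A covering of `Fin n` is a finite family, so `F` itself is a finite subcover.
lemma IsCovering.exists_finset_card_eq_combWeight (hF : IsCovering F) (x : V n) :
    ∃ A : Finset (Set (Fin n)), ↑A ⊆ F ∧ supp x ⊆ ⋃₀ (↑A : Set (Set (Fin n))) ∧
      A.card = combWeight F x := by
  refine Nat.sInf_mem (s := {k | ∃ A : Finset (Set (Fin n)), ↑A ⊆ F ∧
    supp x ⊆ ⋃₀ (↑A : Set (Set (Fin n))) ∧ A.card = k}) ?_
  exact ⟨_, F.toFinite.toFinset, by simp, by simp [show ⋃₀ F = Set.univ from hF], rfl⟩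

@[simp]
lemma combWeight_zero : combWeight F (0 : V n) = 0 :=
  Nat.le_zero.1 <| combWeight_le (A := ∅) (by simp) (by simp [supp])

lemma combWeight_mono (hF : IsCovering F) {x y : V n} (h : supp x ⊆ supp y) :
    combWeight F x ≤ combWeight F y := by
  obtain ⟨A, hAF, hy, hA⟩ := hF.exists_finset_card_eq_combWeight y
  exact hA ▸ combWeight_le hAF (h.trans hy)

lemma combWeight_le_one_iff (hF : IsCovering F) {x : V n} :
    combWeight F x ≤ 1 ↔ x = 0 ∨ ∃ S ∈ F, supp x ⊆ S := by
  constructor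
  · intro hx
    obtain ⟨A, hAF, hcov, hA⟩ := hF.exists_finset_card_eq_combWeight x
    rcases A.eq_empty_or_nonempty with rfl | ⟨S, hS⟩
    · left
      simpa [supp_eq_empty_iff] using hcov
    · refine Or.inr ⟨S, hAF hS, fun i hi => ?_⟩
      obtain ⟨T, hT, hiT⟩ := hcov hi
      rwa [Finset.card_le_one.1 (hA ▸ hx) T hT S hS] at hiT
  · rintro (rfl | ⟨S, hS, hx⟩)
    · simp
    · simpa using combWeight_le (A := {S}) (by simpa using hS) (by simpa using hx)

lemma combWeight_neg (x : V n) : combWeight F (-x) = combWeight F x := by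
  simp only [combWeight, supp_neg]

lemma mem_combBall_zero {x : V n} {r : ℕ} : x ∈ combBall F 0 r ↔ combWeight F x ≤ r := by
  simp [combBall, combDist, combWeight_neg]

end combWeight

theorem stmt_14 {n : ℕ} (F : Set (Set (Fin n))) (hF : IsCovering F)
    (r : ℕ) (hr : 1 ≤ r) :
    combBall F 0 r = combBall (coveringOf F (combBall F 0 r)) 0 1 := by
  have hF' : IsCovering (coveringOf F (combBall F 0 r)) := hF.mono Set.subset_union_left
  ext x
  rw [mem_combBall_zero, mem_combBall_zero, combWeight_le_one_iff hF']
  constructor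
  · intro hx
    by_cases hx0 : x = 0
    · exact Or.inl hx0
    · exact Or.inr ⟨supp x, Or.inr ⟨x, mem_combBall_zero.2 hx, hx0, rfl⟩, subset_rfl⟩
  · rintro (rfl | ⟨S, hS | ⟨y, hy, -, rfl⟩, hxS⟩)
    · simp
    · exact ((combWeight_le_one_iff hF).2 (Or.inr ⟨S, hS, hxS⟩)).trans hr
    · exact (combWeight_mono hF hxS).trans (mem_combBall_zero.1 hy)
end

section
/- The set $D=\{0,\ e_1,\ e_2,\ e_3,\ e_4,\ e_1+e_2,\ e_1+e_3,\ e_1+e_2+e_3\}\subseteq\mathbb{F}_2^4$ is not a ball $B_d(0,r)$ for any TS-metric $d$ on $\mathbb{F}_2^4$ and any $r>0$. -/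
def D16 : Set (V 4) :=
  {0, e 0, e 1, e 2, e 3, e 0 + e 1, e 0 + e 2, e 0 + e 1 + e 2}

theorem mem_ball_zero_of_supp_subset {n : ℕ} {d : V n → V n → ℝ}
    (hsymm : ∀ x y, d x y = d y x) (hresp : RespectsSupport d) {r : ℝ} {x y : V n}
    (hxy : supp x ⊆ supp y) (hy : y ∈ ball d 0 r) : x ∈ ball d 0 r :=
  calc d 0 x = d x 0 := hsymm _ _
    _ ≤ d y 0 := hresp x y hxy
    _ = d 0 y := hsymm _ _
    _ ≤ r := hy

theorem supp_e_one_add_e_two_subset : supp (e 1 + e 2 : V 4) ⊆ supp (e 0 + e 1 + e 2) := by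
  intro i
  simp only [supp, Set.mem_ofPred_eq]
  revert i
  decide

theorem e_zero_add_e_one_add_e_two_mem_D16 : (e 0 + e 1 + e 2 : V 4) ∈ D16 := by
  simp [D16]

theorem e_one_add_e_two_not_mem_D16 : (e 1 + e 2 : V 4) ∉ D16 := by
  simp only [D16, Set.mem_insert_iff, Set.mem_singleton_iff]
  decide

theorem stmt_16 :
    ¬ ∃ (d : V 4 → V 4 → ℝ) (r : ℝ), IsTSMetric d ∧ 0 < r ∧
      D16 = ball d 0 r := by
  rintro ⟨d, r, ⟨⟨-, -, hsymm, -⟩, -, hresp⟩, -, hD⟩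
  have hy := e_zero_add_e_one_add_e_two_mem_D16
  rw [hD] at hy
  apply e_one_add_e_two_not_mem_D16
  rw [hD]
  exact mem_ball_zero_of_supp_subset hsymm hresp supp_e_one_add_e_two_subset hy
end
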